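/- Let S be a finite p-group for odd p, and let L be a subgroup with 𝔛(S) ≤ L ≤ S such that L/𝔛(S) is contained in the center of S/𝔛(S). Then 𝔛(L) = 𝔛(S). -/

import Mathlib

/-- Iterated commutator of subgroups: `[A,B;0] = A`, `[A,B;k+1] = ⁅[A,B;k], B⁆`,
so `[A,B;1] = ⁅A,B⁆` and `[A,B;k] = [[A,B;k-1],B]`. -/
def iterCommutator {G : Type*} [Group G] (A B : Subgroup G) : ℕ → Subgroup G
  | 0 => A
  | k + 1 => ⁅iterCommutator A B k, B⁆

/-- `Ω₁(P)`: the subgroup generated by the elements of `P` of order dividing `p`. -/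
def Omega1 {G : Type*} [Group G] (p : ℕ) (P : Subgroup G) : Subgroup G :=
  Subgroup.closure {x | x ∈ P ∧ x ^ p = 1}

/-- Oliver's condition (∗) for a chain `⊥ = Q 0 ≤ Q 1 ≤ ⋯ ≤ Q n` of normal subgroups:
`[Ω₁(C_G(Q i)), Q (i+1); p-1] = 1` for all `i < n`. -/
def IsOliverChain {G : Type*} [Group G] (p : ℕ) (Q : ℕ → Subgroup G) (n : ℕ) : Prop :=
  Q 0 = ⊥ ∧ (∀ i < n, Q i ≤ Q (i + 1)) ∧ (∀ i ≤ n, (Q i).Normal) ∧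
    ∀ i < n,
      iterCommutator (Omega1 p (Subgroup.centralizer (Q i : Set G))) (Q (i + 1)) (p - 1) = ⊥

/-- A (normal) subgroup `K` admits a chain witnessing Oliver's condition (∗). -/
def HasOliverChain {G : Type*} [Group G] (p : ℕ) (K : Subgroup G) : Prop :=
  ∃ n Q, IsOliverChain p Q n ∧ Q n = K

/-- The Oliver subgroup `𝔛(G)`: the largest normal subgroup of `G` admitting a chain of
`G`-normal subgroups satisfying Oliver's condition (∗). -/
def OliverSubgroup (p : ℕ) (G : Type*) [Group G] : Subgroup G :=
  sSup {K | HasOliverChain p K}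

/-- `E` is an elementary abelian `p`-subgroup. -/
def IsElemAbelian {G : Type*} [Group G] (p : ℕ) (E : Subgroup G) : Prop :=
  (∀ a ∈ E, ∀ b ∈ E, a * b = b * a) ∧ ∀ x ∈ E, x ^ p = 1

/-- The rank of a finite elementary abelian `p`-subgroup `E` (so `|E| = p ^ elemRank p E`). -/
noncomputable def elemRank {G : Type*} [Group G] (p : ℕ) (E : Subgroup G) : ℕ :=
  (Nat.card E).factorization p

/-- The `p`-rank of `G`: the maximal rank of an elementary abelian `p`-subgroup. -/
noncomputable def pRank (p : ℕ) (G : Type*) [Group G] : ℕ :=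
  sSup {n | ∃ E : Subgroup G, IsElemAbelian p E ∧ elemRank p E = n}

/-- The Thompson subgroup `J(G)`, generated by all elementary abelian `p`-subgroups of
rank equal to the `p`-rank of `G`. -/
def Thompson (p : ℕ) (G : Type*) [Group G] : Subgroup G :=
  sSup {E | IsElemAbelian p E ∧ elemRank p E = pRank p G}

open scoped commutatorElement

/-!
Write `X = 𝔛(S)`. An Oliver chain of `S` ending in `X ≤ L` restricts to an Oliver chain of `L`,
so `X ≤ 𝔛(L)`. Conversely, as `L/X` is central in `S/X`, every subgroup between `X` and `L` is
normal in `S`, and as `C_S(X) ≤ X ≤ L` (Lemma 3.2) the centralizer in `S` of such a subgroup is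
its centralizer in `L`. So for an Oliver chain `(Q j)` of `L` with top `𝔛(L)`, the subgroups
`X Q j` continue a chain of `X` in `S`: condition (∗) passes from `Q j ≤ Q (j+1)` to
`X Q j ≤ X Q (j+1)` because `Ω₁(C(X Q j))` centralizes `X`. Hence `𝔛(L) ≤ X Q n ≤ X`.

For Lemma 3.2: if `C = C_S(X) ≰ X`, the nontrivial normal subgroup `XC/X` of the `p`-group `S/X`
meets the centre, giving `X < W ≤ XC` with `W/X` central. Then `[C, W] ≤ X ∩ C = Z(X)`, which
`W` centralizes, so `[C, W; 2] = 1`; as `p - 1 ≥ 2`, `W` would extend the chain of `X`.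
-/

open Subgroup

section IterCommutator

variable {G H : Type*} [Group G] [Group H]

lemma iterCommutator_mono {A A' B B' : Subgroup G} (hA : A ≤ A') (hB : B ≤ B') (k : ℕ) :
    iterCommutator A B k ≤ iterCommutator A' B' k := by
  induction k with
  | zero => exact hA
  | succ k ih => exact commutator_mono ih hB

lemma iterCommutator_eq_bot_of_le {A B : Subgroup G} {j k : ℕ} (h : iterCommutator A B j = ⊥)
    (hjk : j ≤ k) : iterCommutator A B k = ⊥ := by
  induction k, hjk using Nat.le_induction with
  | base => exact h
  | succ k _ ih => rw [iterCommutator, ih, commutator_bot_left]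

lemma map_iterCommutator (f : G →* H) (A B : Subgroup G) (k : ℕ) :
    (iterCommutator A B k).map f = iterCommutator (A.map f) (B.map f) k := by
  induction k with
  | zero => rfl
  | succ k ih => rw [iterCommutator, iterCommutator, map_commutator, ih]

instance iterCommutator.normal {A B : Subgroup G} [A.Normal] [B.Normal] (k : ℕ) :
    (iterCommutator A B k).Normal := by
  induction k with
  | zero => assumption
  | succ k ih => rw [iterCommutator]; infer_instance

lemma iterCommutator_le {A : Subgroup G} [A.Normal] (B : Subgroup G) (k : ℕ) :
    iterCommutator A B k ≤ A := by
  induction k with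
  | zero => exact le_rfl
  | succ k ih => exact (commutator_mono ih le_rfl).trans (commutator_le_left A B)

lemma commutator_sup_right_le {A K B : Subgroup G} [A.Normal] [K.Normal] [B.Normal] :
    ⁅A, K ⊔ B⁆ ≤ ⁅A, K⁆ ⊔ ⁅A, B⁆ := by
  rw [commutator_le]
  intro a ha x hx
  obtain ⟨k, hk, b, hb, rfl⟩ := mem_sup_of_normal_right.mp hx
  rw [commutatorElement_mul_right_eq_mul_conj, mul_assoc, mul_assoc, ← mul_assoc k]
  exact mul_mem (mem_sup_left (commutator_mem_commutator ha hk))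
    ((inferInstance : (⁅A, K⁆ ⊔ ⁅A, B⁆).Normal).conj_mem _
      (mem_sup_right (commutator_mem_commutator ha hb)) k)

lemma iterCommutator_sup_le_of_le_centralizer {A K B : Subgroup G} [A.Normal] [K.Normal]
    [B.Normal] (hAK : A ≤ centralizer (K : Set G)) (k : ℕ) :
    iterCommutator A (K ⊔ B) k ≤ iterCommutator A B k := by
  induction k with
  | zero => exact le_rfl
  | succ k ih =>
    have hK : ⁅iterCommutator A (K ⊔ B) k, K⁆ = ⊥ :=
      commutator_eq_bot_iff_le_centralizer.mpr ((iterCommutator_le _ k).trans hAK)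
    calc ⁅iterCommutator A (K ⊔ B) k, K ⊔ B⁆
        ≤ ⁅iterCommutator A (K ⊔ B) k, K⁆ ⊔ ⁅iterCommutator A (K ⊔ B) k, B⁆ :=
          commutator_sup_right_le
      _ ≤ ⁅iterCommutator A B k, B⁆ := by
          rw [hK, bot_sup_eq]
          exact commutator_mono ih le_rfl

end IterCommutator

section Omega1

variable {G H : Type*} [Group G] [Group H] {p : ℕ}

lemma Omega1_le (P : Subgroup G) : Omega1 p P ≤ P :=
  closure_le P |>.mpr fun _ hx => hx.1

lemma Omega1_mono {P P' : Subgroup G} (h : P ≤ P') : Omega1 p P ≤ Omega1 p P' :=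
  closure_mono fun _ hx => ⟨h hx.1, hx.2⟩

lemma map_Omega1 {f : G →* H} (hf : Function.Injective f) (P : Subgroup G) :
    (Omega1 p P).map f = Omega1 p (P.map f) := by
  rw [Omega1, Omega1, MonoidHom.map_closure]
  congr 1
  ext y
  constructor
  · rintro ⟨x, ⟨hx, hxp⟩, rfl⟩
    exact ⟨mem_map_of_mem f hx, by rw [← map_pow, hxp, map_one]⟩
  · rintro ⟨⟨x, hx, rfl⟩, hxp⟩
    exact ⟨x, ⟨hx, hf (by rw [map_pow, hxp, map_one])⟩, rfl⟩

instance Omega1.normal {P : Subgroup G} [hP : P.Normal] : (Omega1 p P).Normal :=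
  normalizer_eq_top_iff.mp <| top_le_iff.mp <| le_normalizer_closure_iff.mpr fun g _ x hx =>
    subset_closure ⟨hP.conj_mem x hx.1 g, by rw [conj_pow, hx.2, mul_one, mul_inv_cancel]⟩

end Omega1

section OliverChain

variable {G H : Type*} [Group G] [Group H] {p : ℕ}

def IsOliverStep (p : ℕ) (A B : Subgroup G) : Prop :=
  iterCommutator (Omega1 p (centralizer (A : Set G))) B (p - 1) = ⊥

lemma IsOliverStep.sup_left {K A B : Subgroup G} [K.Normal] [A.Normal] [B.Normal]
    (h : IsOliverStep p A B) : IsOliverStep p (K ⊔ A) (K ⊔ B) := by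
  refine le_bot_iff.mp (h ▸ ?_)
  calc iterCommutator (Omega1 p (centralizer ((K ⊔ A : Subgroup G) : Set G))) (K ⊔ B) (p - 1)
      ≤ iterCommutator (Omega1 p (centralizer ((K ⊔ A : Subgroup G) : Set G))) B (p - 1) :=
        iterCommutator_sup_le_of_le_centralizer
          ((Omega1_le _).trans (centralizer_le (SetLike.coe_subset_coe.mpr le_sup_left))) _
    _ ≤ iterCommutator (Omega1 p (centralizer (A : Set G))) B (p - 1) :=
        iterCommutator_mono
          (Omega1_mono (centralizer_le (SetLike.coe_subset_coe.mpr le_sup_right))) le_rfl _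

lemma IsOliverStep.comap {f : H →* G} (hf : Function.Injective f) {A B : Subgroup G}
    (hA : A ≤ f.range) (h : IsOliverStep p A B) : IsOliverStep p (A.comap f) (B.comap f) := by
  have hC : (centralizer ((A.comap f : Subgroup H) : Set H)).map f ≤ centralizer (A : Set G) := by
    refine (map_centralizer_le_centralizer_image _ f).trans (le_of_eq ?_)
    rw [← coe_map, map_comap_eq_self hA]
  refine (map_eq_bot_iff_of_injective _ hf).mp (le_bot_iff.mp (h ▸ ?_))
  rw [map_iterCommutator, map_Omega1 hf]
  exact iterCommutator_mono (Omega1_mono hC) (map_comap_le f B) _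

lemma IsOliverStep.map {f : H →* G} (hf : Function.Injective f) {A B : Subgroup H}
    (hA : centralizer ((A.map f : Subgroup G) : Set G) ≤ f.range) (h : IsOliverStep p A B) :
    IsOliverStep p (A.map f) (B.map f) := by
  have hC : centralizer ((A.map f : Subgroup G) : Set G) ≤ (centralizer (A : Set H)).map f := by
    intro c hc
    obtain ⟨c, rfl⟩ := hA hc
    refine mem_map_of_mem f (mem_centralizer_iff.mpr fun a ha => hf ?_)
    simpa using mem_centralizer_iff.mp hc (f a) (mem_map_of_mem f ha)
  refine le_bot_iff.mp ?_
  rw [← map_bot f, ← h, map_iterCommutator, map_Omega1 hf]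
  exact iterCommutator_mono (Omega1_mono hC) le_rfl _

lemma IsOliverChain.le_top {Q : ℕ → Subgroup G} {n : ℕ} (hQ : IsOliverChain p Q n) {i : ℕ}
    (hi : i ≤ n) : Q i ≤ Q n := by
  suffices ∀ m, i ≤ m → m ≤ n → Q i ≤ Q m from this n hi le_rfl
  intro m him
  induction m, him using Nat.le_induction with
  | base => exact fun _ => le_rfl
  | succ m _ ih => exact fun hmn => (ih (by omega)).trans (hQ.2.1 m (by omega))

lemma HasOliverChain.normal {K : Subgroup G} (hK : HasOliverChain p K) : K.Normal := by
  obtain ⟨n, Q, hQ, rfl⟩ := hK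
  exact hQ.2.2.1 n le_rfl

lemma hasOliverChain_bot : HasOliverChain p (⊥ : Subgroup G) :=
  ⟨0, fun _ => ⊥, ⟨rfl, by omega, fun _ _ => inferInstance, by omega⟩, rfl⟩

lemma HasOliverChain.step {K K' : Subgroup G} (hK : HasOliverChain p K) (hle : K ≤ K')
    [K'.Normal] (h : IsOliverStep p K K') : HasOliverChain p K' := by
  obtain ⟨n, Q, ⟨h0, hmono, hnorm, hstep⟩, rfl⟩ := hK
  set Q' := Function.update Q (n + 1) K'
  have hQ' : ∀ i ≤ n, Q' i = Q i := fun i hi => Function.update_of_ne (by omega) _ _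
  have hQ'n : Q' (n + 1) = K' := Function.update_self ..
  refine ⟨n + 1, Q', ⟨by rw [hQ' 0 (by omega), h0], fun i hi => ?_, fun i hi => ?_,
    fun i hi => ?_⟩, hQ'n⟩
  · rcases Nat.lt_succ_iff_lt_or_eq.mp hi with hi | rfl
    · rw [hQ' i (by omega), hQ' (i + 1) hi]; exact hmono i hi
    · rw [hQ' i le_rfl, hQ'n]; exact hle
  · rcases Nat.le_succ_iff.mp hi with hi | rfl
    · rw [hQ' i hi]; exact hnorm i hi
    · rwa [hQ'n]
  · rcases Nat.lt_succ_iff_lt_or_eq.mp hi with hi | rfl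
    · rw [hQ' i (by omega), hQ' (i + 1) hi]; exact hstep i hi
    · rw [hQ' i le_rfl, hQ'n]; exact h

lemma HasOliverChain.extend {R : ℕ → Subgroup G} {m : ℕ} (h0 : HasOliverChain p (R 0))
    (hmono : ∀ i < m, R i ≤ R (i + 1)) (hnorm : ∀ i < m, (R (i + 1)).Normal)
    (hstep : ∀ i < m, IsOliverStep p (R i) (R (i + 1))) : HasOliverChain p (R m) := by
  induction m with
  | zero => exact h0
  | succ m ih =>
    have := hnorm m (by omega)
    exact (ih (fun i hi => hmono i (by omega)) (fun i hi => hnorm i (by omega))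
      (fun i hi => hstep i (by omega))).step (hmono m (by omega)) (hstep m (by omega))

lemma HasOliverChain.sup {K₁ K₂ : Subgroup G} (h₁ : HasOliverChain p K₁)
    (h₂ : HasOliverChain p K₂) : HasOliverChain p (K₁ ⊔ K₂) := by
  have := h₁.normal
  obtain ⟨n, Q, ⟨h0, hmono, hnorm, hstep⟩, rfl⟩ := h₂
  refine HasOliverChain.extend (R := fun i => K₁ ⊔ Q i) (by simpa [h0] using h₁)
    (fun i hi => sup_le_sup_left (hmono i hi) K₁) (fun i hi => ?_) (fun i hi => ?_)
  · have := hnorm (i + 1) hi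
    exact sup_normal K₁ (Q (i + 1))
  · have := hnorm i hi.le
    have := hnorm (i + 1) hi
    exact IsOliverStep.sup_left (hstep i hi)

lemma HasOliverChain.comap {f : H →* G} (hf : Function.Injective f) {K : Subgroup G}
    (hK : HasOliverChain p K) (hKf : K ≤ f.range) : HasOliverChain p (K.comap f) := by
  obtain ⟨n, Q, hQ, rfl⟩ := hK
  refine ⟨n, fun i => (Q i).comap f, ⟨?_, fun i hi => comap_mono (hQ.2.1 i hi),
    fun i hi => (hQ.2.2.1 i hi).comap f, fun i hi => ?_⟩, rfl⟩
  · change (Q 0).comap f = ⊥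
    rw [hQ.1, MonoidHom.comap_bot, (MonoidHom.ker_eq_bot_iff f).mpr hf]
  · exact IsOliverStep.comap hf ((hQ.le_top hi.le).trans hKf) (hQ.2.2.2 i hi)

lemma le_oliverSubgroup {K : Subgroup G} (hK : HasOliverChain p K) : K ≤ OliverSubgroup p G :=
  le_sSup hK

lemma hasOliverChain_oliverSubgroup (p : ℕ) (G : Type*) [Group G] [Finite G] :
    HasOliverChain p (OliverSubgroup p G) :=
  SupClosed.sSup_mem (s := {K : Subgroup G | HasOliverChain p K})
    (fun _ h₁ _ h₂ => h₁.sup h₂) (Set.toFinite _) hasOliverChain_bot subset_rfl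

instance OliverSubgroup.normal [Finite G] : (OliverSubgroup p G).Normal :=
  (hasOliverChain_oliverSubgroup p G).normal

end OliverChain

section Centralizer

variable {G : Type*} [Group G] {p : ℕ}

lemma normal_of_le_upperCentralSeriesStep {N K : Subgroup G} [N.Normal] (hNK : N ≤ K)
    (hK : K ≤ N.upperCentralSeriesStep) : K.Normal :=
  commutator_top_right_le_iff.mp <| commutator_le.mpr fun _ hk g _ => hNK (hK hk g)

lemma le_upperCentralSeriesStep {N : Subgroup G} [N.Normal] : N ≤ N.upperCentralSeriesStep :=
  fun x hx g => by
    simpa only [commutatorElement_def, mul_assoc] using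
      mul_mem hx (‹N.Normal›.conj_mem _ (inv_mem hx) g)

lemma IsPGroup.inf_center_ne_bot [Fact p.Prime] [Finite G] (hG : IsPGroup p G)
    {N : Subgroup G} [N.Normal] (hN : N ≠ ⊥) : N ⊓ center G ≠ ⊥ := by
  have hpN : p ∣ Nat.card N := by
    have : Nontrivial N := (nontrivial_iff_ne_bot N).mpr hN
    obtain ⟨k, hk, hcard⟩ := (hG.to_subgroup N).nontrivial_iff_card.mp this
    exact hcard ▸ dvd_pow_self p hk.ne'
  have hfix : (1 : N) ∈ MulAction.fixedPoints (ConjAct G) N := fun g => by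
    ext; simp
  obtain ⟨z, hz, hz1⟩ := (hG.of_equiv ConjAct.toConjAct)
    |>.exists_fixed_point_of_prime_dvd_card_of_fixed_point N hpN hfix
  refine (ne_bot_iff_exists_ne_one).mpr ⟨⟨z, z.2, mem_center_iff.mpr fun g => ?_⟩, ?_⟩
  · have := congrArg Subtype.val (hz (ConjAct.toConjAct g))
    rw [ConjAct.Subgroup.val_conj_smul, ConjAct.smul_def, ConjAct.ofConjAct_toConjAct] at this
    exact mul_inv_eq_iff_eq_mul.mp this
  · exact fun h => hz1 (Subtype.ext (congrArg Subtype.val h).symm)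

lemma IsPGroup.exists_mem_upperCentralSeriesStep_notMem [Fact p.Prime] [Finite G]
    (hG : IsPGroup p G) {N M : Subgroup G} [N.Normal] [M.Normal] (hMN : ¬M ≤ N) :
    ∃ z ∈ M, z ∈ N.upperCentralSeriesStep ∧ z ∉ N := by
  have hM : M.map (QuotientGroup.mk' N) ≠ ⊥ := by
    rwa [Ne, Subgroup.map_eq_bot_iff, QuotientGroup.ker_mk']
  have := ‹M.Normal›.map _ (QuotientGroup.mk'_surjective N)
  obtain ⟨⟨_, ⟨z, hzM, rfl⟩, hzZ⟩, hz1⟩ :=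
    (ne_bot_iff_exists_ne_one).mp ((hG.to_quotient N).inf_center_ne_bot hM)
  refine ⟨z, hzM, ?_, fun hzN => hz1 (Subtype.ext ((QuotientGroup.eq_one_iff z).mpr hzN))⟩
  rw [Subgroup.upperCentralSeriesStep_eq_comap_center]
  exact hzZ

lemma iterCommutator_centralizer_two_eq_bot {X W : Subgroup G} [X.Normal]
    (hWC : W ≤ X ⊔ centralizer (X : Set G)) (hWX : W ≤ X.upperCentralSeriesStep) :
    iterCommutator (centralizer (X : Set G)) W 2 = ⊥ := by
  set C := centralizer (X : Set G)
  have hCW : ⁅C, W⁆ ≤ X ⊓ C :=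
    le_inf (commutator_comm C W ▸ commutator_le.mpr fun w hw c _ => hWX hw c)
      (commutator_le_left C W)
  have hZ : X ⊔ C ≤ centralizer ((X ⊓ C : Subgroup G) : Set G) :=
    sup_le (le_centralizer_iff.mpr inf_le_right)
      (le_centralizer_iff.mpr (inf_le_left.trans (le_centralizer_iff.mpr le_rfl)))
  exact commutator_eq_bot_iff_le_centralizer.mpr
    (hCW.trans (le_centralizer_iff.mpr (hWC.trans hZ)))

/-- Oliver's Lemma 3.2. -/
theorem centralizer_oliverSubgroup_le [Fact p.Prime] [Finite G] (hG : IsPGroup p G)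
    (hp : Odd p) :
    centralizer (OliverSubgroup p G : Set G) ≤ OliverSubgroup p G := by
  set X := OliverSubgroup p G
  set C := centralizer (X : Set G)
  by_contra hCX
  obtain ⟨z, hzXC, hzZ, hzX⟩ := hG.exists_mem_upperCentralSeriesStep_notMem
    (M := X ⊔ C) (N := X) fun h => hCX (le_sup_right.trans h)
  set W := (X ⊔ C) ⊓ X.upperCentralSeriesStep
  have hXW : X ≤ W := le_inf le_sup_left le_upperCentralSeriesStep
  have := normal_of_le_upperCentralSeriesStep hXW inf_le_right
  have hstep : IsOliverStep p X W :=
    iterCommutator_eq_bot_of_le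
      (le_bot_iff.mp ((iterCommutator_mono (Omega1_le C) le_rfl 2).trans
        (iterCommutator_centralizer_two_eq_bot inf_le_left inf_le_right).le))
      (by have := (Fact.out : p.Prime).two_le; obtain ⟨k, rfl⟩ := hp; omega)
  exact hzX (le_oliverSubgroup ((hasOliverChain_oliverSubgroup p G).step hXW hstep) ⟨hzXC, hzZ⟩)

end Centralizer

lemma HasOliverChain.map_subgroupOf_sup {G : Type*} [Group G] {p : ℕ} {X L : Subgroup G}
    [X.Normal] (hX : HasOliverChain p X) (hXL : X ≤ L) (hL : L ≤ X.upperCentralSeriesStep)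
    (hCL : centralizer (X : Set G) ≤ L) {K : Subgroup L} (hK : HasOliverChain p K) :
    HasOliverChain p ((X.subgroupOf L ⊔ K).map L.subtype) := by
  obtain ⟨n, Q, ⟨h0, hmono, hnorm, hstep⟩, rfl⟩ := hK
  have hXR : ∀ j, X ≤ (X.subgroupOf L ⊔ Q j).map L.subtype := fun j =>
    (map_subgroupOf_eq_of_le hXL).ge.trans (map_mono le_sup_left)
  refine HasOliverChain.extend (R := fun j => (X.subgroupOf L ⊔ Q j).map L.subtype)
    (by simpa [h0, map_subgroupOf_eq_of_le hXL] using hX)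
    (fun j hj => map_mono (sup_le_sup_left (hmono j hj) _))
    (fun j _ => normal_of_le_upperCentralSeriesStep (hXR _) ((map_subtype_le _).trans hL))
    (fun j hj => ?_)
  have := hnorm j hj.le
  have := hnorm (j + 1) hj
  refine IsOliverStep.map L.subtype_injective ?_ (IsOliverStep.sup_left (hstep j hj))
  rw [range_subtype]
  exact (centralizer_le (SetLike.coe_subset_coe.mpr (hXR j))).trans hCL

/-- if `𝔛(S) ≤ L ≤ S` and `L/𝔛(S)` is contained in the center of
`S/𝔛(S)` (i.e. `⁅s, l⁆ ∈ 𝔛(S)` for all `l ∈ L`, `s ∈ S`), then `𝔛(L) = 𝔛(S)`. -/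
theorem oliver_eq_of_central (p : ℕ) [Fact p.Prime] (hp : Odd p)
    (S : Type*) [Group S] [Fintype S] (hS : IsPGroup p S)
    (L : Subgroup S) (hXL : OliverSubgroup p S ≤ L)
    (hcentral : ∀ l ∈ L, ∀ s : S, ⁅s, l⁆ ∈ OliverSubgroup p S) :
    Subgroup.map L.subtype (OliverSubgroup p L) = OliverSubgroup p S := by
  set X := OliverSubgroup p S
  have hL : L ≤ X.upperCentralSeriesStep := fun l hl s => by
    simpa only [commutatorElement_inv] using inv_mem (hcentral l hl s)
  apply le_antisymm
  · have hchain := (hasOliverChain_oliverSubgroup p S).map_subgroupOf_sup hXL hL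
      ((centralizer_oliverSubgroup_le hS hp).trans hXL) (hasOliverChain_oliverSubgroup p L)
    exact (map_mono le_sup_right).trans (le_oliverSubgroup hchain)
  · have hchain := (hasOliverChain_oliverSubgroup p S).comap L.subtype_injective
      (hXL.trans_eq L.range_subtype.symm)
    calc X = (X.comap L.subtype).map L.subtype := (map_subgroupOf_eq_of_le hXL).symm
      _ ≤ (OliverSubgroup p L).map L.subtype := map_mono (le_oliverSubgroup hchain)
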